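/- Assume χ ≠ 0. For each k ∈ {1,2,3} with a_k ≥ 2 and each 1 ≤ p ≤ a_k−1, the vector u = a_k·φ_{k,a_k−p} lies in H⁰ and is the unique element of H⁰ satisfying (u | γ_b⁰)₀ = 1 and (u | γ_{j,m}⁰)₀ = δ_{j,k}·(ζ_k^{mp} − ζ_k^{(m−1)p}) for all 1 ≤ j ≤ 3 and 1 ≤ m ≤ a_j−1. Equivalently, ω_b + Σ_{m=1}^{a_k−1} (ζ_k^{mp} − ζ_k^{(m−1)p})·ω_{k,m} = a_k·φ_{k,a_k−p}, where ω_b and the ω_{k,m} are the fundamental weights, i.e. the basis of H⁰ dual to the simple roots with respect to (·|·)₀. -/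

import Mathlib

open scoped BigOperators

noncomputable section

/-- Indices of the twisted sectors: `⟨k, p⟩` encodes `φ_{k, p.val + 1}`. -/
abbrev TwIdx (a : Fin 3 → ℕ) := (k : Fin 3) × Fin (a k - 1)

/-- Index set of the basis `{𝟏, P} ∪ {φ_{k,p}}` of the Chen–Ruan cohomology `H`:
`Sum.inl 0 = 𝟏`, `Sum.inl 1 = P`, `Sum.inr ⟨k,p⟩ = φ_{k,p+1}`. -/
abbrev Idx (a : Fin 3 → ℕ) := Fin 2 ⊕ TwIdx a

/-- The Chen–Ruan cohomology `H` of `ℙ¹_{a₁,a₂,a₃}`, as coordinates on the basis. -/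
abbrev HSp (a : Fin 3 → ℕ) := Idx a → ℂ

/-- The unit class `𝟏`. -/
def eOne (a : Fin 3 → ℕ) : HSp a := fun i => if i = Sum.inl 0 then 1 else 0

/-- The point class `P`. -/
def eP (a : Fin 3 → ℕ) : HSp a := fun i => if i = Sum.inl 1 then 1 else 0

/-- The twisted class `φ_{k,p}` (with `p : Fin (a k - 1)` encoding `p.val + 1`). -/
def ePhi (a : Fin 3 → ℕ) (k : Fin 3) (p : Fin (a k - 1)) : HSp a :=
  fun i => if i = Sum.inr ⟨k, p⟩ then 1 else 0

/-- `d_{k,p} = 1 - p/a_k`. -/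
def dd (a : Fin 3 → ℕ) (k : Fin 3) (p : Fin (a k - 1)) : ℂ :=
  1 - ((p.val : ℂ) + 1) / (a k : ℂ)

/-- `χ = 1/a₁ + 1/a₂ + 1/a₃ - 1`. -/
def chiQ (a : Fin 3 → ℕ) : ℚ := 1 / (a 0) + 1 / (a 1) + 1 / (a 2) - 1

/-- The Poincaré pairing: `(𝟏,P) = 1`, `(φ_{k,p}, φ_{k,a_k-p}) = 1/a_k`
(note `Fin.rev p` encodes `a_k - p`), all other pairings of basis vectors `0`. -/
def pairH (a : Fin 3 → ℕ) (x y : HSp a) : ℂ :=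
  x (Sum.inl 0) * y (Sum.inl 1) + x (Sum.inl 1) * y (Sum.inl 0) +
    ∑ k : Fin 3, ∑ p : Fin (a k - 1),
      (1 / (a k : ℂ)) * x (Sum.inr ⟨k, p⟩) * y (Sum.inr ⟨k, p.rev⟩)

/-- The operator `ρ`: `ρ(𝟏) = χP`, `ρ(P) = 0`, `ρ(φ_{k,p}) = 0`. -/
def rhoOp (a : Fin 3 → ℕ) (x : HSp a) : HSp a :=
  fun i => if i = Sum.inl 1 then (chiQ a : ℂ) * x (Sum.inl 0) else 0

/-- The intersection form on `H⁰`: `(x|y)₀ := (x, (1-ρ)y)`. -/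
def iform0 (a : Fin 3 → ℕ) (x y : HSp a) : ℂ := pairH a x (y - rhoOp a y)

/-- The subspace `H⁰ ⊂ H`, spanned by `𝟏 + χP` and the twisted classes `φ_{k,p}`. -/
def H0 (a : Fin 3 → ℕ) : Submodule ℂ (HSp a) :=
  Submodule.span ℂ ({eOne a + (chiQ a : ℂ) • eP a} ∪
    Set.range (fun i : TwIdx a => ePhi a i.1 i.2))

/-- `ζ_k = e^{2πi/a_k}`. -/
def zeta (a : Fin 3 → ℕ) (k : Fin 3) : ℂ :=
  Complex.exp (2 * (Real.pi : ℂ) * Complex.I / (a k : ℂ))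

/-- The simple root at the branching node: `γ_b⁰ = 𝟏 + χP + Σ_{k,p} φ_{k,p}`. -/
def gammaB (a : Fin 3 → ℕ) : HSp a :=
  eOne a + (chiQ a : ℂ) • eP a + ∑ k : Fin 3, ∑ p : Fin (a k - 1), ePhi a k p

/-- The simple roots on the legs:
`γ_{k,m}⁰ = Σ_{p=1}^{a_k-1} (ζ_k^{mp} - ζ_k^{(m-1)p})·φ_{k,p}`
(with `m : Fin (a k - 1)` encoding `m.val + 1`). -/
def gammaT (a : Fin 3 → ℕ) (k : Fin 3) (m : Fin (a k - 1)) : HSp a :=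
  ∑ p : Fin (a k - 1),
    (zeta a k ^ ((m.val + 1) * (p.val + 1)) - zeta a k ^ (m.val * (p.val + 1))) •
      ePhi a k p

section Aux
variable (a : Fin 3 → ℕ)

lemma sub_rho (y : HSp a) (hy : y (Sum.inl 0) = 0) : y - rhoOp a y = y := by
  funext i
  simp [rhoOp, hy, Pi.sub_apply]

lemma gammaT_inl (j : Fin 3) (m : Fin (a j - 1)) (t : Fin 2) :
    gammaT a j m (Sum.inl t) = 0 := by
  simp [gammaT, ePhi, Finset.sum_apply]

lemma gammaT_inr (j : Fin 3) (m : Fin (a j - 1)) (k' : Fin 3) (t : Fin (a k' - 1)) :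
    gammaT a j m (Sum.inr ⟨k', t⟩) =
      if k' = j then
        zeta a j ^ ((m.val + 1) * (t.val + 1)) - zeta a j ^ (m.val * (t.val + 1))
      else 0 := by
  by_cases h : k' = j
  · subst h
    simp only [gammaT, Finset.sum_apply, Pi.smul_apply, ePhi, smul_eq_mul, if_pos rfl]
    rw [Finset.sum_eq_single t]
    · simp
    · intro q _ hq
      have hne : (Sum.inr ⟨k', t⟩ : Idx a) ≠ Sum.inr ⟨k', q⟩ := by
        simp only [ne_eq, Sum.inr.injEq, Sigma.mk.inj_iff, heq_eq_eq, true_and]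
        exact fun h => absurd h.symm hq
      rw [if_neg hne, mul_zero]
    · simp
  · simp only [gammaT, Finset.sum_apply, Pi.smul_apply, ePhi, smul_eq_mul, if_neg h]
    apply Finset.sum_eq_zero
    intro q _
    have hne : (Sum.inr ⟨k', t⟩ : Idx a) ≠ Sum.inr ⟨j, q⟩ := by
      simp only [ne_eq, Sum.inr.injEq, Sigma.mk.inj_iff]
      exact fun hcon => absurd hcon.1 h
    rw [if_neg hne, mul_zero]

lemma gammaB_inr (j : Fin 3) (t : Fin (a j - 1)) :
    gammaB a (Sum.inr ⟨j, t⟩) = 1 := by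
  simp only [gammaB, Pi.add_apply, Pi.smul_apply, eOne, eP, smul_eq_mul,
    Finset.sum_apply]
  rw [if_neg (by simp), if_neg (by simp)]
  rw [Finset.sum_eq_single j]
  · rw [Finset.sum_eq_single t]
    · simp [ePhi]
    · intro q _ hq
      have hne : (Sum.inr ⟨j, t⟩ : Idx a) ≠ Sum.inr ⟨j, q⟩ := by
        simp only [ne_eq, Sum.inr.injEq, Sigma.mk.inj_iff, heq_eq_eq, true_and]
        exact fun h => absurd h.symm hq
      simp [ePhi, hne]
    · simp
  · intro k' _ hk'
    apply Finset.sum_eq_zero; intro q _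
    have hne : (Sum.inr ⟨j, t⟩ : Idx a) ≠ Sum.inr ⟨k', q⟩ := by
      simp only [ne_eq, Sum.inr.injEq, Sigma.mk.inj_iff]
      exact fun hcon => absurd hcon.1 (Ne.symm hk')
    simp [ePhi, hne]
  · simp
end Aux

section Aux2
variable (a : Fin 3 → ℕ)

lemma gammaB_inl0 : gammaB a (Sum.inl 0) = 1 := by
  simp [gammaB, eOne, eP, ePhi, Finset.sum_apply]

lemma gammaB_inl1 : gammaB a (Sum.inl 1) = (chiQ a : ℂ) := by
  simp [gammaB, eOne, eP, ePhi, Finset.sum_apply]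

lemma iform0_gammaT (u : HSp a) (j : Fin 3) (m : Fin (a j - 1)) :
    iform0 a u (gammaT a j m) =
      ∑ q : Fin (a j - 1), (1 / (a j : ℂ)) * u (Sum.inr ⟨j, q⟩) *
        (zeta a j ^ ((m.val + 1) * (q.rev.val + 1)) -
          zeta a j ^ (m.val * (q.rev.val + 1))) := by
  rw [iform0, sub_rho a _ (gammaT_inl a j m 0), pairH,
    gammaT_inl a j m 0, gammaT_inl a j m 1]
  rw [Finset.sum_eq_single j]
  · rw [mul_zero, mul_zero, zero_add, zero_add]
    refine Finset.sum_congr rfl fun q _ => ?_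
    rw [gammaT_inr, if_pos rfl]
  · intro k' _ hk'
    apply Finset.sum_eq_zero; intro q _
    rw [gammaT_inr, if_neg hk', mul_zero]
  · simp

lemma iform0_gammaB (u : HSp a) :
    iform0 a u (gammaB a) =
      u (Sum.inl 1) + ∑ j : Fin 3, ∑ q : Fin (a j - 1),
        (1 / (a j : ℂ)) * u (Sum.inr ⟨j, q⟩) := by
  rw [iform0, pairH]
  have h0 : (gammaB a - rhoOp a (gammaB a)) (Sum.inl 0) = 1 := by
    simp [Pi.sub_apply, rhoOp, gammaB_inl0]
  have h1 : (gammaB a - rhoOp a (gammaB a)) (Sum.inl 1) = 0 := by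
    simp [Pi.sub_apply, rhoOp, gammaB_inl0, gammaB_inl1]
  have h2 : ∀ (j : Fin 3) (t : Fin (a j - 1)),
      (gammaB a - rhoOp a (gammaB a)) (Sum.inr ⟨j, t⟩) = 1 := by
    intro j t
    simp [Pi.sub_apply, rhoOp, gammaB_inr]
  rw [h0, h1, mul_zero, mul_one, zero_add]
  congr 1
  refine Finset.sum_congr rfl fun j _ => Finset.sum_congr rfl fun q _ => ?_
  rw [h2, mul_one]

lemma mem_H0 (w : HSp a) (hw : w ∈ H0 a) :
    w (Sum.inl 1) = (chiQ a : ℂ) * w (Sum.inl 0) := by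
  let L : HSp a →ₗ[ℂ] ℂ :=
    LinearMap.proj (Sum.inl 1) - (chiQ a : ℂ) • LinearMap.proj (Sum.inl 0)
  have hle : H0 a ≤ LinearMap.ker L := by
    rw [H0, Submodule.span_le]
    intro x hx
    simp only [Set.mem_union, Set.mem_singleton_iff, Set.mem_range] at hx
    rcases hx with rfl | ⟨i, rfl⟩
    · simp [L, eOne, eP, LinearMap.mem_ker]
    · simp [L, ePhi, LinearMap.mem_ker]
  have := hle hw
  rw [LinearMap.mem_ker] at this
  simpa [L, sub_eq_zero] using this

end Aux2

section Aux3

lemma geom_aux (n : ℕ) (ζ : ℂ) (hζ : IsPrimitiveRoot ζ n) (r : ℕ) :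
    ∑ m ∈ Finset.range n, ζ ^ (m * r) = if n ∣ r then (n : ℂ) else 0 := by
  have hrw : ∀ m, ζ ^ (m * r) = (ζ ^ r) ^ m := fun m => by
    rw [← pow_mul, Nat.mul_comm]
  simp only [hrw]
  by_cases hd : n ∣ r
  · rw [if_pos hd, (hζ.pow_eq_one_iff_dvd r).mpr hd]
    simp
  · rw [if_neg hd]
    have h1 : ζ ^ r ≠ 1 := fun h => hd ((hζ.pow_eq_one_iff_dvd r).mp h)
    have h2 : (ζ ^ r) ^ n = 1 := by
      rw [← pow_mul, mul_comm, pow_mul, hζ.pow_eq_one, one_pow]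
    have h3 := geom_sum_mul (ζ ^ r) n
    rw [h2, sub_self] at h3
    rcases mul_eq_zero.mp h3 with h | h
    · exact h
    · exact absurd (by rwa [sub_eq_zero] at h) h1

lemma dvd_iff_rev (n : ℕ) (hn : 2 ≤ n) (q' q : Fin (n - 1)) :
    n ∣ (q'.rev.val + 1 + (q.val + 1)) ↔ q' = q := by
  have hq' : q'.val < n - 1 := q'.isLt
  have hq : q.val < n - 1 := q.isLt
  have hrev : q'.rev.val = n - 1 - (q'.val + 1) := Fin.val_rev q'
  constructor
  · intro hd
    have hpos : 0 < q'.rev.val + 1 + (q.val + 1) := by omega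
    have hle : n ≤ q'.rev.val + 1 + (q.val + 1) := Nat.le_of_dvd hpos hd
    have hlt : q'.rev.val + 1 + (q.val + 1) - n < n := by omega
    have := Nat.eq_zero_of_dvd_of_lt (Nat.dvd_sub hd dvd_rfl) hlt
    have heq : q'.val = q.val := by omega
    exact Fin.ext heq
  · rintro rfl
    have : q'.rev.val + 1 + (q'.val + 1) = n := by omega
    rw [this]

lemma dvd_iff_rev' (n : ℕ) (hn : 2 ≤ n) (p q : Fin (n - 1)) :
    n ∣ (p.val + 1 + (q.val + 1)) ↔ q = p.rev := by
  have h := dvd_iff_rev n hn p.rev q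
  rw [Fin.rev_rev] at h
  exact h.trans eq_comm

lemma dft_key (n : ℕ) (hn : 2 ≤ n) (ζ : ℂ) (hζ : IsPrimitiveRoot ζ n)
    (x : Fin (n - 1) → ℂ) (c : ℂ) (p : Fin (n - 1))
    (h : ∀ m : Fin (n - 1),
      ∑ q : Fin (n - 1), x q *
          (ζ ^ ((m.val + 1) * (q.rev.val + 1)) - ζ ^ (m.val * (q.rev.val + 1)))
        = c * (ζ ^ ((m.val + 1) * (p.val + 1)) - ζ ^ (m.val * (p.val + 1)))) :
    ∀ q : Fin (n - 1), x q = c * (if q = p.rev then 1 else 0) := by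
  intro q
  have hn0 : (n : ℂ) ≠ 0 := Nat.cast_ne_zero.mpr (by omega)
  set S : ℕ → ℂ := fun m => ∑ q' : Fin (n - 1), x q' * ζ ^ (m * (q'.rev.val + 1))
    with hSdef
  have hstep : ∀ m, m < n - 1 →
      S (m + 1) - S m = c * (ζ ^ ((m + 1) * (p.val + 1)) - ζ ^ (m * (p.val + 1))) := by
    intro m hm
    calc S (m + 1) - S m
        = ∑ q' : Fin (n - 1), x q' *
            (ζ ^ ((m + 1) * (q'.rev.val + 1)) - ζ ^ (m * (q'.rev.val + 1))) := by
          rw [hSdef, ← Finset.sum_sub_distrib]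
          exact Finset.sum_congr rfl fun q' _ => by ring
      _ = _ := h ⟨m, hm⟩
  have htel : ∀ m, m ≤ n - 1 → S m = S 0 + c * (ζ ^ (m * (p.val + 1)) - 1) := by
    intro m
    induction m with
    | zero => intro _; simp
    | succ m ih =>
      intro hm
      have h1 := ih (by omega)
      have h2 := hstep m (by omega)
      linear_combination h1 + h2
  have hT1 : ∑ m ∈ Finset.range n, S m * ζ ^ (m * (q.val + 1)) = (n : ℂ) * x q := by
    simp only [hSdef, Finset.sum_mul]
    rw [Finset.sum_comm]
    have hin : ∀ q' : Fin (n - 1),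
        ∑ m ∈ Finset.range n, x q' * ζ ^ (m * (q'.rev.val + 1)) * ζ ^ (m * (q.val + 1))
          = x q' * (if n ∣ (q'.rev.val + 1 + (q.val + 1)) then (n : ℂ) else 0) := by
      intro q'
      rw [← geom_aux n ζ hζ, Finset.mul_sum]
      refine Finset.sum_congr rfl fun m _ => ?_
      rw [mul_assoc, ← pow_add, ← Nat.mul_add]
    rw [Finset.sum_congr rfl fun q' _ => hin q']
    rw [Finset.sum_eq_single q]
    · rw [if_pos ((dvd_iff_rev n hn q q).mpr rfl)]; ring
    · intro q' _ hq'
      rw [if_neg (fun hd => hq' ((dvd_iff_rev n hn q' q).mp hd)), mul_zero]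
    · intro hq; exact absurd (Finset.mem_univ q) hq
  have hT2 : ∑ m ∈ Finset.range n, S m * ζ ^ (m * (q.val + 1))
      = c * (if n ∣ (p.val + 1 + (q.val + 1)) then (n : ℂ) else 0) := by
    have hterm : ∀ m ∈ Finset.range n, S m * ζ ^ (m * (q.val + 1))
        = (S 0 - c) * ζ ^ (m * (q.val + 1)) + c * ζ ^ (m * (p.val + 1 + (q.val + 1))) := by
      intro m hm
      rw [htel m (by have := Finset.mem_range.mp hm; omega)]
      have hpow : ζ ^ (m * (p.val + 1 + (q.val + 1)))
          = ζ ^ (m * (p.val + 1)) * ζ ^ (m * (q.val + 1)) := by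
        rw [Nat.mul_add, pow_add]
      rw [hpow]; ring
    rw [Finset.sum_congr rfl hterm, Finset.sum_add_distrib, ← Finset.mul_sum,
      ← Finset.mul_sum, geom_aux n ζ hζ, geom_aux n ζ hζ]
    have hq1 : ¬ n ∣ (q.val + 1) := by
      intro hd
      have := Nat.le_of_dvd (by omega) hd
      have := q.isLt
      omega
    rw [if_neg hq1, mul_zero, zero_add]
  rw [hT1] at hT2
  by_cases hqp : q = p.rev
  · rw [if_pos ((dvd_iff_rev' n hn p q).mpr hqp)] at hT2
    rw [if_pos hqp, mul_one]
    have h2 : (n : ℂ) * x q = (n : ℂ) * c := by rw [hT2]; ring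
    exact mul_left_cancel₀ hn0 h2
  · rw [if_neg (fun hd => hqp ((dvd_iff_rev' n hn p q).mp hd)), mul_zero] at hT2
    rw [if_neg hqp, mul_zero]
    rcases mul_eq_zero.mp hT2 with h | h
    · exact absurd h hn0
    · exact h

end Aux3

/-- `a_k·φ_{k,a_k-p}` lies in `H⁰` and is the unique element of `H⁰` pairing to `1` with
`γ_b⁰` and to `δ_{j,k}·(ζ_k^{mp} - ζ_k^{(m-1)p})` with `γ_{j,m}⁰`; equivalently
`ω_b + Σ_m (ζ_k^{mp} - ζ_k^{(m-1)p})·ω_{k,m} = a_k·φ_{k,a_k-p}` in terms of the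
fundamental weights. (Here `p.rev` encodes `a_k - p`.) -/
theorem stmt9 (a : Fin 3 → ℕ) (ha : ∀ k, 0 < a k) (hchi : chiQ a ≠ 0)
    (k : Fin 3) (hk : 2 ≤ a k) (p : Fin (a k - 1)) :
    ((a k : ℂ) • ePhi a k p.rev ∈ H0 a) ∧
    iform0 a ((a k : ℂ) • ePhi a k p.rev) (gammaB a) = 1 ∧
    (∀ (j : Fin 3) (m : Fin (a j - 1)),
      iform0 a ((a k : ℂ) • ePhi a k p.rev) (gammaT a j m) =
        if j = k then
          zeta a k ^ ((m.val + 1) * (p.val + 1)) - zeta a k ^ (m.val * (p.val + 1))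
        else 0) ∧
    (∀ u : HSp a, u ∈ H0 a →
      iform0 a u (gammaB a) = 1 →
      (∀ (j : Fin 3) (m : Fin (a j - 1)),
        iform0 a u (gammaT a j m) =
          if j = k then
            zeta a k ^ ((m.val + 1) * (p.val + 1)) - zeta a k ^ (m.val * (p.val + 1))
          else 0) →
      u = (a k : ℂ) • ePhi a k p.rev) := by
  have hak : (a k : ℂ) ≠ 0 := Nat.cast_ne_zero.mpr (by omega)
  set v : HSp a := (a k : ℂ) • ePhi a k p.rev with hv
  have hvinl : ∀ t : Fin 2, v (Sum.inl t) = 0 := by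
    intro t; simp [hv, ePhi]
  -- existence: pairing with gammaB
  have hexB : iform0 a v (gammaB a) = 1 := by
    rw [iform0_gammaB, hvinl 1, zero_add]
    rw [Finset.sum_eq_single k]
    · rw [Finset.sum_eq_single p.rev]
      · simp only [hv, Pi.smul_apply, smul_eq_mul, ePhi, if_pos rfl, if_true]
        field_simp
      · intro q _ hq
        have hne : (Sum.inr ⟨k, q⟩ : Idx a) ≠ Sum.inr ⟨k, p.rev⟩ := by
          simp only [ne_eq, Sum.inr.injEq, Sigma.mk.inj_iff, heq_eq_eq, true_and]
          exact hq
        simp [hv, ePhi, hne]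
      · intro h; exact absurd (Finset.mem_univ _) h
    · intro j _ hj
      apply Finset.sum_eq_zero; intro q _
      have hne : (Sum.inr ⟨j, q⟩ : Idx a) ≠ Sum.inr ⟨k, p.rev⟩ := by
        simp only [ne_eq, Sum.inr.injEq, Sigma.mk.inj_iff]
        exact fun hcon => absurd hcon.1 hj
      simp [hv, ePhi, hne]
    · intro h; exact absurd (Finset.mem_univ _) h
  -- existence: pairing with gammaT
  have hexT : ∀ (j : Fin 3) (m : Fin (a j - 1)),
      iform0 a v (gammaT a j m) =
        if j = k then
          zeta a k ^ ((m.val + 1) * (p.val + 1)) - zeta a k ^ (m.val * (p.val + 1))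
        else 0 := by
    intro j m
    rw [iform0_gammaT]
    by_cases hj : j = k
    · subst hj
      rw [if_pos rfl, Finset.sum_eq_single p.rev]
      · rw [Fin.rev_rev]
        simp only [hv, Pi.smul_apply, smul_eq_mul, ePhi, if_pos rfl, if_true]
        field_simp
      · intro q _ hq
        have hne : (Sum.inr ⟨j, q⟩ : Idx a) ≠ Sum.inr ⟨j, p.rev⟩ := by
          simp only [ne_eq, Sum.inr.injEq, Sigma.mk.inj_iff, heq_eq_eq, true_and]
          exact hq
        simp [hv, ePhi, hne]
      · intro h; exact absurd (Finset.mem_univ _) h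
    · rw [if_neg hj]
      apply Finset.sum_eq_zero; intro q _
      have hne : (Sum.inr ⟨j, q⟩ : Idx a) ≠ Sum.inr ⟨k, p.rev⟩ := by
        simp only [ne_eq, Sum.inr.injEq, Sigma.mk.inj_iff]
        exact fun hcon => absurd hcon.1 hj
      simp [hv, ePhi, hne]
  refine ⟨?_, hexB, hexT, ?_⟩
  · exact Submodule.smul_mem _ _
      (Submodule.subset_span (Set.mem_union_right _ ⟨⟨k, p.rev⟩, rfl⟩))
  -- uniqueness
  intro u hu h1 h2
  have hcoord : ∀ (j : Fin 3) (q : Fin (a j - 1)),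
      u (Sum.inr ⟨j, q⟩) = v (Sum.inr ⟨j, q⟩) := by
    intro j q
    have hnj : 2 ≤ a j := by have := q.isLt; omega
    have haj : (a j : ℂ) ≠ 0 := Nat.cast_ne_zero.mpr (by omega)
    have hζj : IsPrimitiveRoot (zeta a j) (a j) := by
      rw [zeta]; exact Complex.isPrimitiveRoot_exp _ (by omega)
    by_cases hj : j = k
    · subst hj
      have hsum : ∀ m : Fin (a j - 1),
          ∑ q' : Fin (a j - 1), u (Sum.inr ⟨j, q'⟩) *
            (zeta a j ^ ((m.val + 1) * (q'.rev.val + 1)) -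
              zeta a j ^ (m.val * (q'.rev.val + 1)))
          = (a j : ℂ) * (zeta a j ^ ((m.val + 1) * (p.val + 1)) -
              zeta a j ^ (m.val * (p.val + 1))) := by
        intro m
        have h' := h2 j m
        rw [iform0_gammaT, if_pos rfl] at h'
        calc ∑ q' : Fin (a j - 1), u (Sum.inr ⟨j, q'⟩) *
              (zeta a j ^ ((m.val + 1) * (q'.rev.val + 1)) -
                zeta a j ^ (m.val * (q'.rev.val + 1)))
            = (a j : ℂ) * ∑ q' : Fin (a j - 1), (1 / (a j : ℂ)) * u (Sum.inr ⟨j, q'⟩) *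
              (zeta a j ^ ((m.val + 1) * (q'.rev.val + 1)) -
                zeta a j ^ (m.val * (q'.rev.val + 1))) := by
              rw [Finset.mul_sum]
              refine Finset.sum_congr rfl fun q' _ => ?_
              field_simp
          _ = _ := by rw [h']
      have hx := dft_key (a j) hnj (zeta a j) hζj
        (fun q' => u (Sum.inr ⟨j, q'⟩)) ((a j : ℂ)) p hsum q
      rw [hx]
      by_cases hq : q = p.rev
      · rw [if_pos hq]
        simp [hv, ePhi, hq]
      · rw [if_neg hq]
        have hne : (Sum.inr ⟨j, q⟩ : Idx a) ≠ Sum.inr ⟨j, p.rev⟩ := by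
          simp only [ne_eq, Sum.inr.injEq, Sigma.mk.inj_iff, heq_eq_eq, true_and]
          exact hq
        simp [hv, ePhi, hne]
    · have hsum : ∀ m : Fin (a j - 1),
          ∑ q' : Fin (a j - 1), u (Sum.inr ⟨j, q'⟩) *
            (zeta a j ^ ((m.val + 1) * (q'.rev.val + 1)) -
              zeta a j ^ (m.val * (q'.rev.val + 1)))
          = 0 * (zeta a j ^ ((m.val + 1) * (q.val + 1)) -
              zeta a j ^ (m.val * (q.val + 1))) := by
        intro m
        have h' := h2 j m
        rw [iform0_gammaT, if_neg hj] at h'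
        rw [zero_mul]
        calc ∑ q' : Fin (a j - 1), u (Sum.inr ⟨j, q'⟩) *
              (zeta a j ^ ((m.val + 1) * (q'.rev.val + 1)) -
                zeta a j ^ (m.val * (q'.rev.val + 1)))
            = (a j : ℂ) * ∑ q' : Fin (a j - 1), (1 / (a j : ℂ)) * u (Sum.inr ⟨j, q'⟩) *
              (zeta a j ^ ((m.val + 1) * (q'.rev.val + 1)) -
                zeta a j ^ (m.val * (q'.rev.val + 1))) := by
              rw [Finset.mul_sum]
              refine Finset.sum_congr rfl fun q' _ => ?_
              field_simp
          _ = 0 := by rw [h', mul_zero]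
      have hx := dft_key (a j) hnj (zeta a j) hζj
        (fun q' => u (Sum.inr ⟨j, q'⟩)) 0 q hsum q
      rw [hx, zero_mul]
      have hne : (Sum.inr ⟨j, q⟩ : Idx a) ≠ Sum.inr ⟨k, p.rev⟩ := by
        simp only [ne_eq, Sum.inr.injEq, Sigma.mk.inj_iff]
        exact fun hcon => absurd hcon.1 hj
      simp [hv, ePhi, hne]
  have hP : u (Sum.inl 1) = 0 := by
    have hB := h1
    rw [iform0_gammaB] at hB
    have hvB := hexB
    rw [iform0_gammaB, hvinl 1, zero_add] at hvB
    have hsums : (∑ j : Fin 3, ∑ q : Fin (a j - 1),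
          (1 / (a j : ℂ)) * u (Sum.inr ⟨j, q⟩))
        = ∑ j : Fin 3, ∑ q : Fin (a j - 1), (1 / (a j : ℂ)) * v (Sum.inr ⟨j, q⟩) :=
      Finset.sum_congr rfl fun j _ => Finset.sum_congr rfl fun q _ => by
        rw [hcoord]
    rw [hsums, hvB] at hB
    linear_combination hB
  have h0 : u (Sum.inl 0) = 0 := by
    have hm := mem_H0 a u hu
    rw [hP] at hm
    have hχ : (chiQ a : ℂ) ≠ 0 := by
      simpa using (Rat.cast_ne_zero (α := ℂ)).mpr hchi
    rcases mul_eq_zero.mp hm.symm with h | h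
    · exact absurd h hχ
    · exact h
  funext i
  rcases i with t | s
  · fin_cases t
    · exact h0.trans (hvinl 0).symm
    · exact hP.trans (hvinl 1).symm
  · obtain ⟨j, q⟩ := s
    exact hcoord j q
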